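/- Let X be a closed subvariety of the torus T^m over k. For every x ∈ X^an each coordinate function x_i is a unit in k[X], so |x_i|_x > 0, and the map π : X^an → ℝ^m defined by π(x) = (−log|x_1|_x, ..., −log|x_m|_x) is well-defined. This map π is continuous and proper: the preimage under π of every compact subset of ℝ^m is compact. -/

import Mathlib

open scoped BigOperators Classical

noncomputable section

/-- The extended real line `R̄ = ℝ ∪ {∞}`. -/
abbrev Rbar : Type := WithTop ℝ

/-- The map `a ↦ exp (−a)`, sending `∞` to `0`. -/
def expNeg (t : Rbar) : ℝ := if h : t = ⊤ then 0 else Real.exp (-(t.untop h))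

/-- The topology on `R̄` in which `ℝ` carries its usual topology and the completed rays
`(a, ∞]` are a basis of neighborhoods of `∞`; equivalently, the topology induced by the
injection `expNeg : R̄ → ℝ`, which is a homeomorphism onto `[0, ∞)`. -/
instance : TopologicalSpace Rbar := TopologicalSpace.induced expNeg inferInstance

/-- `−log r`, with `−log 0 = ∞`. -/
def negLog (r : ℝ) : Rbar := if r = 0 then ⊤ else (((-Real.log r : ℝ)) : Rbar)

/-- `ν : K → ℝ ∪ {∞}` is a (nonarchimedean) valuation: `ν(0) = ∞`,
`ν(ab) = ν(a) + ν(b)`, and `ν(a + b) ≥ min (ν a) (ν b)`. -/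
structure IsVal {K : Type} [Field K] (ν : K → Rbar) : Prop where
  map_zero : ν 0 = ⊤
  map_mul : ∀ a b : K, ν (a * b) = ν a + ν b
  min_le_add : ∀ a b : K, min (ν a) (ν b) ≤ ν (a + b)

/-- The valuation `ν` is nontrivial: `ν(K*) ≠ {0}`. -/
def IsNontrivialVal {K : Type} [Field K] (ν : K → Rbar) : Prop :=
  ∃ a : K, a ≠ 0 ∧ ν a ≠ 0

/-- The trivial valuation on a field `k`: `ν(a) = 0` for `a ≠ 0` and `ν(0) = ∞`. -/
def nuTriv (k : Type) [Field k] : k → Rbar := fun a => if a = 0 then ⊤ else 0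

/-- `K` is complete with respect to the valuation `ν`, i.e. with respect to the induced
nonarchimedean absolute value `expNeg ∘ ν`: every Cauchy sequence converges. -/
def VComplete {K : Type} [Field K] (ν : K → Rbar) : Prop :=
  ∀ s : ℕ → K,
    (∀ ε : ℝ, 0 < ε → ∃ N : ℕ, ∀ p ≥ N, ∀ q ≥ N, expNeg (ν (s p - s q)) < ε) →
    ∃ L : K, ∀ ε : ℝ, 0 < ε → ∃ N : ℕ, ∀ p ≥ N, expNeg (ν (s p - L)) < ε

/-- A multiplicative seminorm on a commutative ring `A`: a nonnegative real-valued
function with `|0| = 0`, `|1| = 1`, `|fg| = |f|·|g|` and `|f + g| ≤ |f| + |g|`. -/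
structure IsMultSeminorm {A : Type} [CommRing A] (p : A → ℝ) : Prop where
  nonneg : ∀ f, 0 ≤ p f
  map_zero : p 0 = 0
  map_one : p 1 = 1
  map_mul : ∀ f g, p (f * g) = p f * p g
  add_le : ∀ f g, p (f + g) ≤ p f + p g

/-- A seminorm on the `K`-algebra `A` is compatible with `ν` if `|a| = exp(−ν(a))` for
every scalar `a ∈ K`. -/
def Compat {K A : Type} [Field K] [CommRing A] [Algebra K A] (ν : K → Rbar) (p : A → ℝ) :
    Prop :=
  ∀ a : K, p (algebraMap K A a) = expNeg (ν a)

/-- The analytification `X^an` of the affine variety `X = Spec A` over the complete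
nonarchimedean field `(K, ν)`: the set of multiplicative seminorms on `A` compatible with
`ν`, topologized (as a subset of `A → ℝ` with the product topology) by the coarsest
topology making `x ↦ |f|_x` continuous for every `f ∈ A`. -/
def Xan (K A : Type) [Field K] [CommRing A] [Algebra K A] (ν : K → Rbar) : Set (A → ℝ) :=
  {p | IsMultSeminorm p ∧ Compat ν p}

/-- The analytification `X^an` over a trivially valued field `k`: the set of
multiplicative seminorms on `A` that are equal to `1` on `k*`, with the topology of
pointwise convergence. -/
def XanTriv (k A : Type) [Field k] [CommRing A] [Algebra k A] : Set (A → ℝ) :=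
  {p | IsMultSeminorm p ∧ ∀ a : k, a ≠ 0 → p (algebraMap k A a) = 1}

/-- The projection `π_ι : X^an → R̄^m` attached to the affine embedding `ι` given by the
generators `f 0, ..., f (m-1)` of `A`: `x ↦ (−log|f 0|_x, ..., −log|f (m-1)|_x)`. -/
def piIota {K A : Type} [Field K] [CommRing A] [Algebra K A] (ν : K → Rbar) {m : ℕ}
    (f : Fin m → A) (x : ↥(Xan K A ν)) : Fin m → Rbar :=
  fun i => negLog (x.1 (f i))

/-- The projection `π_ι : X^an → R̄^m` for a trivially valued base field. -/
def piIotaTriv {k A : Type} [Field k] [CommRing A] [Algebra k A] {m : ℕ}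
    (f : Fin m → A) (x : ↥(XanTriv k A)) : Fin m → Rbar :=
  fun i => negLog (x.1 (f i))

/-- The tropicalization `Trop(X, ι)` of the affine embedding `ι : X ↪ A^m` of
`X = Spec A` given by the generators `f` of `A`: the closure in `R̄^m` of the set of
coordinatewise valuations of the `K`-points of `X`. -/
def TropX {K A : Type} [Field K] [CommRing A] [Algebra K A] (ν : K → Rbar) {m : ℕ}
    (f : Fin m → A) : Set (Fin m → Rbar) :=
  closure {v | ∃ φ : A →ₐ[K] K, v = fun i => ν (φ (f i))}

/-- The tropicalization `Trop(φ) : R̄^m → R̄^n` of the equivariant morphism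
`φ : A^m → A^n` whose coordinates are `y_j ↦ c_j · x^{a_j}`, namely
`v ↦ (ν(c_1) + ⟨a_1, v⟩, ..., ν(c_n) + ⟨a_n, v⟩)`, with the conventions `ν(0) = ∞`,
`∞ + t = ∞`, `a_i · ∞ = ∞` for `a_i > 0`, and `0 · ∞ = 0`. -/
def tropMap {K : Type} [Field K] (ν : K → Rbar) {m n : ℕ} (c : Fin n → K)
    (a : Fin n → Fin m → ℕ) (v : Fin m → Rbar) : Fin n → Rbar :=
  fun j => ν (c j) + ∑ i, (a j i) • v i

/-- The affine embeddings of `X = Spec A`: an embedding `ι : X ↪ A^m` is a tuple of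
generators of `A` as a `K`-algebra. -/
def AffEmb (K A : Type) [Field K] [CommRing A] [Algebra K A] : Type :=
  Σ m : ℕ, {f : Fin m → A // Algebra.adjoin K (Set.range f) = ⊤}

/-- The map `X^an → Π_ι R̄^{m(ι)}`, `x ↦ (π_ι(x))_ι`, over all affine embeddings `ι`. -/
def bigMap (K A : Type) [Field K] [CommRing A] [Algebra K A] (ν : K → Rbar)
    (x : ↥(Xan K A ν)) : ∀ e : AffEmb K A, Fin e.1 → Rbar :=
  fun e => piIota ν e.2.1 x

/-- The inverse limit `varprojlim Trop(X, ι)`, realized inside `Π_ι R̄^{m(ι)}`: families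
`(y_ι)` with `y_ι ∈ Trop(X, ι)` for all `ι` and `y_ȷ = Trop(φ)(y_ι)` for every
equivariant morphism `φ : A^{m(ι)} → A^{m(ȷ)}` with `ȷ = φ ∘ ι`. -/
def limitSet (K A : Type) [Field K] [CommRing A] [Algebra K A] (ν : K → Rbar) :
    Set (∀ e : AffEmb K A, Fin e.1 → Rbar) :=
  {y | (∀ e : AffEmb K A, y e ∈ TropX ν e.2.1) ∧
    ∀ (e e' : AffEmb K A) (c : Fin e'.1 → K) (a : Fin e'.1 → Fin e.1 → ℕ),
      (∀ j, e'.2.1 j = algebraMap K A (c j) * ∏ i, (e.2.1 i) ^ (a j i)) →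
      y e' = tropMap ν c a (y e)}

/-- The ring of Laurent polynomials `K[x_1^{±1}, ..., x_m^{±1}]`, i.e. the group algebra
of `ℤ^m` over `K`. -/
abbrev Laur (K : Type) [Field K] (m : ℕ) : Type := AddMonoidAlgebra K (Fin m → ℤ)

/-- Evaluation of a Laurent polynomial at a point `y ∈ K^m` (meaningful when the
relevant coordinates of `y` are invertible). -/
def lEval {K : Type} [Field K] {m : ℕ} (y : Fin m → K) (g : Laur K m) : K :=
  ∑ u ∈ g.coeff.support, g.coeff u * ∏ i, (y i) ^ (u i)

/-- The tropical minimum of the Laurent polynomial `f` at `v ∈ ℝ^m` is attained twice: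
the minimum of `ν(a_u) + ⟨u, v⟩` over `u ∈ supp(f)` is achieved by at least two distinct
`u ∈ supp(f)`.  (Equivalently, the initial form of `f` at `v` is not a monomial.) -/
def MinTwice {K : Type} [Field K] {m : ℕ} (ν : K → Rbar) (f : Laur K m) (v : Fin m → ℝ) :
    Prop :=
  ∃ u ∈ f.coeff.support, ∃ u' ∈ f.coeff.support, u ≠ u' ∧
    ν (f.coeff u) + ((∑ i, (u i : ℝ) * v i : ℝ) : Rbar)
      = ν (f.coeff u') + ((∑ i, (u' i : ℝ) * v i : ℝ) : Rbar) ∧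
    ∀ w ∈ f.coeff.support,
      ν (f.coeff u) + ((∑ i, (u i : ℝ) * v i : ℝ) : Rbar)
        ≤ ν (f.coeff w) + ((∑ i, (w i : ℝ) * v i : ℝ) : Rbar)

/-- With the trivial valuation: the minimum of `⟨u, w⟩` over `supp g` is attained by at
least two distinct `u ∈ supp g`. -/
def MinTwiceTriv {k : Type} [Field k] {m : ℕ} (g : Laur k m) (w : Fin m → ℝ) : Prop :=
  ∃ u ∈ g.coeff.support, ∃ u' ∈ g.coeff.support, u ≠ u' ∧
    (∑ i, (u i : ℝ) * w i) = (∑ i, (u' i : ℝ) * w i) ∧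
    ∀ z ∈ g.coeff.support, (∑ i, (u i : ℝ) * w i) ≤ ∑ i, (z i : ℝ) * w i

/-- The tropicalization `T_trop(J)` of an ideal of Laurent polynomials: the set of
`v ∈ ℝ^m` such that for every nonzero `f ∈ J` the tropical minimum of `f` at `v` is
attained twice. -/
def Ttrop {K : Type} [Field K] {m : ℕ} (ν : K → Rbar) (J : Ideal (Laur K m)) :
    Set (Fin m → ℝ) :=
  {v | ∀ f ∈ J, f ≠ 0 → MinTwice ν f v}

/-- The `K`-points of the closed subvariety of the torus `T^m` cut out by the ideal `I`:
points of `(K*)^m` at which every element of `I` vanishes. -/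
def torusPoints {K : Type} [Field K] {m : ℕ} (I : Ideal (Laur K m)) :
    Set (Fin m → Kˣ) :=
  {y | ∀ f ∈ I, lEval (fun i => (y i : K)) f = 0}

/-- The real number `ν(a)` (with junk value `0` when `ν(a) = ∞`, i.e. when `a = 0`). -/
def vR {K : Type} [Field K] (ν : K → Rbar) (a : K) : ℝ := WithTop.untopD 0 (ν a)

/-- The set `{trop(y) : y ∈ X(K)} ⊆ ℝ^m` of coordinatewise valuations of the `K`-points
of the closed subvariety of the torus cut out by `I`; `trop(X)` is its closure. -/
def tropImg {K : Type} [Field K] {m : ℕ} (ν : K → Rbar) (I : Ideal (Laur K m)) :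
    Set (Fin m → ℝ) :=
  {w | ∃ y ∈ torusPoints I, w = fun i => vR ν ((y i : Kˣ) : K)}

/-- The `K`-points of the closed subvariety of `A^m` cut out by the ideal `J`. -/
def affPoints {K : Type} [Field K] {m : ℕ} (J : Ideal (MvPolynomial (Fin m) K)) :
    Set (Fin m → K) :=
  {y | ∀ f ∈ J, MvPolynomial.eval y f = 0}

/-- The extended tropicalization in `R̄^m` of a set of points of `A^m(K)`: the closure of
the set of coordinatewise valuations. -/
def TropAff {K : Type} [Field K] {m : ℕ} (ν : K → Rbar) (S : Set (Fin m → K)) :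
    Set (Fin m → Rbar) :=
  closure {v | ∃ y ∈ S, v = fun i => ν (y i)}

/-- The coefficientwise extension map
`k[x_1^{±1}, ..., x_m^{±1}] → K[x_1^{±1}, ..., x_m^{±1}]` along `algebraMap k K`. -/
def laurExt (k K : Type) [Field k] [Field K] [Algebra k K] (m : ℕ) :
    Laur k m →ₐ[k] Laur K m :=
  (AddMonoidAlgebra.lift k (Laur K m) (Fin m → ℤ)) (AddMonoidAlgebra.of K (Fin m → ℤ))

/-- The `i`-th coordinate function `x_i` in the coordinate ring
`k[X] = k[x_1^{±1}, ..., x_m^{±1}] / I` of a closed subvariety of the torus. -/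
def coordLaur {k : Type} [Field k] {m : ℕ} (I : Ideal (Laur k m)) (i : Fin m) :
    Laur k m ⧸ I :=
  Ideal.Quotient.mk I (AddMonoidAlgebra.single (Pi.single i (1 : ℤ)) (1 : k))

/-- The projection `π : X^an → ℝ^m`, `x ↦ (−log|x_1|_x, ..., −log|x_m|_x)`, for a closed
subvariety of the torus over a trivially valued field. -/
def piTorus {k : Type} [Field k] {m : ℕ} (I : Ideal (Laur k m))
    (x : ↥(XanTriv k (Laur k m ⧸ I))) : Fin m → ℝ :=
  fun i => -Real.log (x.1 (coordLaur I i))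

/-- `trop(X)` for a closed subvariety of the torus over a trivially valued field: the
set of `v ∈ ℝ^m` such that for every nonzero `f ∈ I` the minimum of `⟨u, v⟩` over
`supp f` is attained at least twice. -/
def tropTrivTorus {k : Type} [Field k] {m : ℕ} (I : Ideal (Laur k m)) :
    Set (Fin m → ℝ) :=
  {v | ∀ f ∈ I, f ≠ 0 → MinTwiceTriv f v}

/-- The vanishing ideal of `X ∩ T^{I₀}` for the affine embedding of `X = Spec A` given
by generators `f`: Laurent polynomials in the variables `x_i`, `i ∈ I₀` (support
condition), vanishing at every `k`-point `y` of `X` with `y_i ≠ 0` iff `i ∈ I₀`. -/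
def stratVanishing (k A : Type) [Field k] [CommRing A] [Algebra k A] {m : ℕ}
    (f : Fin m → A) (I0 : Finset (Fin m)) : Set (Laur k m) :=
  {g | (∀ u ∈ g.coeff.support, ∀ i, i ∉ I0 → u i = 0) ∧
    ∀ φ : A →ₐ[k] k, (∀ i, φ (f i) ≠ 0 ↔ i ∈ I0) → lEval (fun i => φ (f i)) g = 0}

/-- The extended tropicalization `Trop(X, ι) ⊆ R̄^m` over a trivially valued field: the
union over `I₀ ⊆ {1, ..., m}` of the sets `trop(X ∩ T^{I₀})`, each embedded in the
stratum `ℝ^{I₀} = {v : v_i < ∞ iff i ∈ I₀}` (coordinates `∞` off `I₀`). -/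
def TropStrat (k A : Type) [Field k] [CommRing A] [Algebra k A] {m : ℕ}
    (f : Fin m → A) : Set (Fin m → Rbar) :=
  {v | ∃ (I0 : Finset (Fin m)) (w : Fin m → ℝ),
        (v = fun i => if i ∈ I0 then ((w i : ℝ) : Rbar) else ⊤) ∧
        ∀ g ∈ stratVanishing k A f I0, g ≠ 0 → MinTwiceTriv g w}

/-- The map `X^an → Π_ι R̄^{m(ι)}` over a trivially valued field. -/
def bigMapTriv (k A : Type) [Field k] [CommRing A] [Algebra k A]
    (x : ↥(XanTriv k A)) : ∀ e : AffEmb k A, Fin e.1 → Rbar :=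
  fun e => piIotaTriv e.2.1 x

/-- The inverse limit `varprojlim Trop(X, ι)` over a trivially valued field, realized
inside `Π_ι R̄^{m(ι)}`. -/
def limitSetTriv (k A : Type) [Field k] [CommRing A] [Algebra k A] :
    Set (∀ e : AffEmb k A, Fin e.1 → Rbar) :=
  {y | (∀ e : AffEmb k A, y e ∈ TropStrat k A e.2.1) ∧
    ∀ (e e' : AffEmb k A) (c : Fin e'.1 → k) (a : Fin e'.1 → Fin e.1 → ℕ),
      (∀ j, e'.2.1 j = algebraMap k A (c j) * ∏ i, (e.2.1 i) ^ (a j i)) →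
      y e' = tropMap (nuTriv k) c a (y e)}

/-! Multiplicativity makes `u ↦ log |x^u|_x` an additive map on `ℤ^m`, so the absolute value
of every Laurent monomial is determined by `π(x)`: `log |x^u|_x = -⟨u, π(x)⟩`. Hence, if `π(x)`
stays in a ball of radius `R`, each `|f|_x` is bounded by `∑_{u ∈ supp f} exp (R |u|₁)`,
uniformly in `x`. So `π⁻¹(C)` lies in a product of compact intervals, and it is closed there
because `X^an` is closed in `ℝ^{k[X]}`; Tychonoff gives compactness. -/

theorem AddMonoidAlgebra.isUnit_single_one {R G : Type} [Semiring R] [AddGroup G] (g : G) :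
    IsUnit (AddMonoidAlgebra.single g (1 : R)) :=
  ⟨⟨AddMonoidAlgebra.single g 1, AddMonoidAlgebra.single (-g) 1,
    by simp [AddMonoidAlgebra.single_mul_single, AddMonoidAlgebra.one_def],
    by simp [AddMonoidAlgebra.single_mul_single, AddMonoidAlgebra.one_def]⟩, rfl⟩

namespace IsMultSeminorm

section

variable {A : Type} [CommRing A] {p : A → ℝ}

theorem map_sum_le (hp : IsMultSeminorm p) {β : Type} (s : Finset β) (F : β → A) :
    p (∑ b ∈ s, F b) ≤ ∑ b ∈ s, p (F b) :=
  Finset.le_sum_of_subadditive p hp.map_zero.le hp.add_le s F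

theorem pos_of_isUnit (hp : IsMultSeminorm p) {a : A} (ha : IsUnit a) : 0 < p a := by
  obtain ⟨b, hab⟩ := ha.exists_right_inv
  have h : p a * p b = 1 := by rw [← hp.map_mul, hab, hp.map_one]
  exact (hp.nonneg a).lt_of_ne fun h0 => by simp [← h0] at h

theorem comp {B : Type} [CommRing B] (hp : IsMultSeminorm p) (φ : B →+* A) :
    IsMultSeminorm (p ∘ φ) where
  nonneg _ := hp.nonneg _
  map_zero := by simp [hp.map_zero]
  map_one := by simp [hp.map_one]
  map_mul _ _ := by simp [hp.map_mul]
  add_le _ _ := by simpa using hp.add_le _ _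

end

section Laurent

open AddMonoidAlgebra

variable {k : Type} [Field k] {m : ℕ} {p : Laur k m → ℝ}

theorem log_map_single_one (hp : IsMultSeminorm p) (u : Fin m → ℤ) :
    Real.log (p (single u 1)) = ∑ i, u i * Real.log (p (single (Pi.single i 1) 1)) := by
  let L : (Fin m → ℤ) →+ ℝ :=
    { toFun u := Real.log (p (single u 1))
      map_zero' := by rw [← one_def, hp.map_one, Real.log_one]
      map_add' u v := by
        rw [show single (u + v) (1 : k) = single u 1 * single v 1 by
            rw [single_mul_single, one_mul], hp.map_mul,
          Real.log_mul (hp.pos_of_isUnit (isUnit_single_one u)).ne'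
            (hp.pos_of_isUnit (isUnit_single_one v)).ne'] }
  calc L u = ∑ i, L (u i • Pi.single i 1) := by
        simp_rw [← Pi.single_smul', smul_eq_mul, mul_one, ← map_sum, Finset.univ_sum_single]
    _ = ∑ i, u i * L (Pi.single i 1) := by simp_rw [map_zsmul, zsmul_eq_mul]

theorem map_single (hp : IsMultSeminorm p)
    (hk : ∀ a : k, a ≠ 0 → p (algebraMap k (Laur k m) a) = 1) {a : k} (ha : a ≠ 0)
    (u : Fin m → ℤ) : p (single u a) = p (single u 1) := by
  rw [← mul_one a, ← smul_single', Algebra.smul_def, hp.map_mul, hk a ha, one_mul]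

theorem map_le_sum_exp (hp : IsMultSeminorm p)
    (hk : ∀ a : k, a ≠ 0 → p (algebraMap k (Laur k m) a) = 1) {R : ℝ}
    (hR : ∀ i, |Real.log (p (single (Pi.single i 1) 1))| ≤ R) (g : Laur k m) :
    p g ≤ ∑ u ∈ g.coeff.support, Real.exp (R * ∑ i, |(u i : ℝ)|) := by
  have hmonomial (u : Fin m → ℤ) : p (single u 1) ≤ Real.exp (R * ∑ i, |(u i : ℝ)|) := by
    rw [← Real.exp_log (hp.pos_of_isUnit (isUnit_single_one u)), Real.exp_le_exp,
      hp.log_map_single_one, Finset.mul_sum]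
    refine Finset.sum_le_sum fun i _ => ?_
    calc (u i : ℝ) * Real.log (p (single (Pi.single i 1) 1))
        ≤ |(u i : ℝ)| * |Real.log (p (single (Pi.single i 1) 1))| :=
          (le_abs_self _).trans_eq (abs_mul _ _)
      _ ≤ R * |(u i : ℝ)| := by rw [mul_comm]; gcongr; exact hR i
  conv_lhs => rw [← g.sum_coeff_single, Finsupp.sum]
  refine (hp.map_sum_le _ _).trans (Finset.sum_le_sum fun u hu => ?_)
  rw [hp.map_single hk (Finsupp.mem_support_iff.mp hu)]
  exact hmonomial u

end Laurent

end IsMultSeminorm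

theorem isClosed_setOf_isMultSeminorm (A : Type) [CommRing A] :
    IsClosed {p : A → ℝ | IsMultSeminorm p} := by
  have h : {p : A → ℝ | IsMultSeminorm p} =
      {p | ∀ f, 0 ≤ p f} ∩ {p | p 0 = 0} ∩ {p | p 1 = 1} ∩
        {p | ∀ f g, p (f * g) = p f * p g} ∩ {p | ∀ f g, p (f + g) ≤ p f + p g} := by
    ext p
    exact ⟨fun h => ⟨⟨⟨⟨h.1, h.2⟩, h.3⟩, h.4⟩, h.5⟩,
      fun ⟨⟨⟨⟨h1, h2⟩, h3⟩, h4⟩, h5⟩ => ⟨h1, h2, h3, h4, h5⟩⟩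
  simp only [h, Set.ofPred_forall]
  refine .inter (.inter (.inter (.inter ?_ ?_) ?_) ?_) ?_
  · exact isClosed_iInter fun f => isClosed_le continuous_const (continuous_apply f)
  · exact isClosed_eq (continuous_apply 0) continuous_const
  · exact isClosed_eq (continuous_apply 1) continuous_const
  · exact isClosed_iInter fun f => isClosed_iInter fun g =>
      isClosed_eq (continuous_apply _) ((continuous_apply f).mul (continuous_apply g))
  · exact isClosed_iInter fun f => isClosed_iInter fun g =>
      isClosed_le (continuous_apply _) ((continuous_apply f).add (continuous_apply g))

theorem isClosed_xanTriv (k A : Type) [Field k] [CommRing A] [Algebra k A] :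
    IsClosed (XanTriv k A) := by
  simp only [XanTriv, Set.ofPred_and, Set.ofPred_forall]
  exact (isClosed_setOf_isMultSeminorm A).inter <| isClosed_iInter fun a => isClosed_iInter fun _ =>
    isClosed_eq (continuous_apply _) continuous_const


theorem XanTriv.apply_mk_le_sum_exp {k : Type} [Field k] {m : ℕ} {I : Ideal (Laur k m)}
    (x : XanTriv k (Laur k m ⧸ I)) {R : ℝ} (hR : ∀ i, |piTorus I x i| ≤ R) (g : Laur k m) :
    x.1 (Ideal.Quotient.mk I g) ≤ ∑ u ∈ g.coeff.support, Real.exp (R * ∑ i, |(u i : ℝ)|) :=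
  (x.2.1.comp (Ideal.Quotient.mk I)).map_le_sum_exp
    (fun a ha => by rw [Function.comp_apply, Ideal.Quotient.mk_algebraMap]; exact x.2.2 a ha)
    (fun i => (abs_neg _).ge.trans (hR i)) g

theorem stmt16_general {k : Type} [Field k]
    (m : ℕ) (I : Ideal (Laur k m)) :
    (∀ i : Fin m, IsUnit (coordLaur I i)) ∧
      (∀ x : ↥(XanTriv k (Laur k m ⧸ I)), ∀ i : Fin m, 0 < x.1 (coordLaur I i)) ∧
      Continuous (piTorus I) ∧
      ∀ C : Set (Fin m → ℝ), IsCompact C → IsCompact (piTorus I ⁻¹' C) := by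
  have hunit (i : Fin m) : IsUnit (coordLaur I i) :=
    (AddMonoidAlgebra.isUnit_single_one _).map (Ideal.Quotient.mk I)
  have hpos (x : ↥(XanTriv k (Laur k m ⧸ I))) (i : Fin m) : 0 < x.1 (coordLaur I i) :=
    x.2.1.pos_of_isUnit (hunit i)
  have hcont : Continuous (piTorus I) := continuous_pi fun i =>
    (((continuous_apply _).comp continuous_subtype_val).log fun x => (hpos x i).ne').neg
  refine ⟨hunit, hpos, hcont, fun C hC => ?_⟩
  obtain ⟨R, hR⟩ := hC.isBounded.subset_closedBall 0
  let lift := Function.surjInv (Ideal.Quotient.mk_surjective (I := I))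
  let bound (f : Laur k m ⧸ I) : ℝ :=
    ∑ u ∈ (lift f).coeff.support, Real.exp (R * ∑ i, |(u i : ℝ)|)
  have hbox : IsCompact (Subtype.val ⁻¹' Set.univ.pi fun f => Set.Icc 0 (bound f) :
      Set (XanTriv k (Laur k m ⧸ I))) :=
    (isClosed_xanTriv k _).isClosedEmbedding_subtypeVal.isCompact_preimage
      (isCompact_univ_pi fun _ => isCompact_Icc)
  refine hbox.of_isClosed_subset (hC.isClosed.preimage hcont) fun x hx f _ =>
    ⟨x.2.1.nonneg f, ?_⟩
  have hxR (i : Fin m) : |piTorus I x i| ≤ R :=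
    (norm_le_pi_norm _ i).trans (mem_closedBall_zero_iff.1 (hR hx))
  simpa [lift, Function.surjInv_eq] using XanTriv.apply_mk_le_sum_exp x hxR (lift f)

/-- Over an algebraically closed trivially valued field `k`, let
`X ⊆ T^m` be cut out by the radical ideal `I`.  Each coordinate function `x_i` is a unit
in `k[X]`, every `x ∈ X^an` satisfies `|x_i|_x > 0` (so `π : X^an → ℝ^m`,
`x ↦ (−log|x_1|_x, ..., −log|x_m|_x)`, is well-defined), and `π` is continuous and
proper: the preimage of every compact subset of `ℝ^m` is compact. -/
theorem stmt16 {k : Type} [Field k] [IsAlgClosed k]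
    (m : ℕ) (I : Ideal (Laur k m)) (hrad : I.IsRadical) :
    (∀ i : Fin m, IsUnit (coordLaur I i)) ∧
      (∀ x : ↥(XanTriv k (Laur k m ⧸ I)), ∀ i : Fin m, 0 < x.1 (coordLaur I i)) ∧
      Continuous (piTorus I) ∧
      ∀ C : Set (Fin m → ℝ), IsCompact C → IsCompact (piTorus I ⁻¹' C) :=
  stmt16_general m I

end
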